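/- A graph G is weakly closed if and only if its complement graph is a comparability graph. -/

import Mathlib

/-- A graph `G` is weakly closed if its vertices admit a labelling by `1, …, n` such that
for all `i < j < k`, if `{i, k}` is an edge then `{i, j}` or `{j, k}` is an edge. -/
def WeaklyClosed {V : Type} [Fintype V] (G : SimpleGraph V) : Prop :=
  ∃ f : V ≃ Fin (Fintype.card V), ∀ a b c : V,
    f a < f b → f b < f c → G.Adj a c → G.Adj a b ∨ G.Adj b c

/-- A comparability graph: a graph admitting a partial order on its vertex set such that two
distinct vertices are adjacent if and only if they are comparable. -/
def IsComparabilityGraph {V : Type} (G : SimpleGraph V) : Prop :=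
  ∃ r : V → V → Prop, IsPartialOrder V r ∧ ∀ a b, G.Adj a b ↔ a ≠ b ∧ (r a b ∨ r b a)

/-!
If `f` is a weakly closed labelling, then `a ≺ b :↔ f a < f b ∧ ¬ G.Adj a b` is transitive —
this is precisely the weak closure condition — so its reflexive closure is a partial order whose
comparability graph is `Gᶜ`. Conversely, given a partial order with comparability graph `Gᶜ`,
label the vertices along a linear extension: if `f a < f b < f c` with `ab`, `bc` non-edges of `G`,
these pairs are comparable, hence `a < b < c`, so `a`, `c` are comparable and `ac` is no edge.
-/

namespace SimpleGraph

variable {V : Type} {α : Type*} (G : SimpleGraph V)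

def IsWeaklyClosedLabelling [LT α] (f : V → α) : Prop :=
  ∀ a b c, f a < f b → f b < f c → G.Adj a c → G.Adj a b ∨ G.Adj b c

variable {G}

theorem IsWeaklyClosedLabelling.isStrictOrder [Preorder α] {f : V → α}
    (hf : G.IsWeaklyClosedLabelling f) : IsStrictOrder V (fun a b ↦ f a < f b ∧ ¬G.Adj a b) where
  irrefl _ h := lt_irrefl _ h.1
  trans _ _ _ hab hbc :=
    ⟨hab.1.trans hbc.1, fun hac ↦ (hf _ _ _ hab.1 hbc.1 hac).elim hab.2 hbc.2⟩

theorem IsWeaklyClosedLabelling.isComparabilityGraph_compl [LinearOrder α] {f : V → α}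
    (hinj : f.Injective) (hf : G.IsWeaklyClosedLabelling f) : IsComparabilityGraph Gᶜ := by
  have := hf.isStrictOrder
  let _ := partialOrderOfSO fun a b ↦ f a < f b ∧ ¬G.Adj a b
  refine ⟨(· ≤ ·), inferInstance, fun a b ↦ ?_⟩
  rw [compl_adj]
  constructor
  · rintro ⟨hne, hab⟩
    rcases (hinj.ne hne).lt_or_gt with h | h
    · exact ⟨hne, .inl (.inr ⟨h, hab⟩)⟩
    · exact ⟨hne, .inr (.inr ⟨h, fun hba ↦ hab hba.symm⟩)⟩
  · rintro ⟨hne, (rfl | ⟨-, hab⟩) | (rfl | ⟨-, hba⟩)⟩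
    exacts [(hne rfl).elim, ⟨hne, hab⟩, (hne rfl).elim, ⟨hne, fun hab ↦ hba hab.symm⟩]

theorem IsWeaklyClosedLabelling.weaklyClosed [Fintype V] [LinearOrder α] {f : V → α}
    (hinj : f.Injective) (hf : G.IsWeaklyClosedLabelling f) : WeaklyClosed G := by
  let _ := LinearOrder.lift' f hinj
  let e := (Fintype.orderIsoFinOfCardEq V rfl).symm
  exact ⟨e.toEquiv, fun a b c hab hbc ↦ hf a b c (e.lt_iff_lt.mp hab) (e.lt_iff_lt.mp hbc)⟩

section PartialOrder

variable [PartialOrder V]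

theorem lt_of_compl_adj_of_lt [Preorder α] {f : V → α}
    (hG : ∀ a b, Gᶜ.Adj a b ↔ a ≠ b ∧ (a ≤ b ∨ b ≤ a)) (hf : Monotone f) {a b : V}
    (hab : Gᶜ.Adj a b) (hlt : f a < f b) : a < b := by
  obtain ⟨hne, hle | hge⟩ := (hG a b).mp hab
  · exact hle.lt_of_ne hne
  · exact absurd (hf hge) hlt.not_ge

theorem isWeaklyClosedLabelling_of_monotone [Preorder α] {f : V → α}
    (hG : ∀ a b, Gᶜ.Adj a b ↔ a ≠ b ∧ (a ≤ b ∨ b ≤ a)) (hf : Monotone f) :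
    G.IsWeaklyClosedLabelling f := by
  intro a b c hab hbc hac
  by_contra! h
  have hab' := lt_of_compl_adj_of_lt hG hf ⟨(hab.ne <| congrArg f ·), h.1⟩ hab
  have hbc' := lt_of_compl_adj_of_lt hG hf ⟨(hbc.ne <| congrArg f ·), h.2⟩ hbc
  exact ((hG a c).mpr ⟨(hab'.trans hbc').ne, .inl (hab'.trans hbc').le⟩).2 hac

end PartialOrder

end SimpleGraph

open SimpleGraph

/-- A graph `G` is weakly closed if and only if its complement is a comparability graph. -/
theorem weaklyClosed_iff_compl_comparability {V : Type} [Fintype V] (G : SimpleGraph V) :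
    WeaklyClosed G ↔ IsComparabilityGraph Gᶜ := by
  constructor
  · rintro ⟨f, hf⟩
    exact IsWeaklyClosedLabelling.isComparabilityGraph_compl f.injective hf
  · rintro ⟨r, hr, hG⟩
    let _ : PartialOrder V :=
      { le := r
        le_refl := refl_of r
        le_trans := fun _ _ _ ↦ trans_of r
        le_antisymm := fun _ _ ↦ antisymm_of r }
    exact IsWeaklyClosedLabelling.weaklyClosed (f := toLinearExtension) (fun _ _ ↦ id)
      (isWeaklyClosedLabelling_of_monotone hG toLinearExtension.monotone)
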